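/- Let D be a one-dimensional valuation domain, not a DVR, with quotient field K, additive valuation ω : K^× → ℝ, and value group G := ω(K^×) dense in ℝ, and define φ(I) := sup{ω(x) : x ∈ K^×, I ⊆ xD} for nonzero fractional ideals I of D. Then for all divisorial fractional ideals I, J of D, φ((IJ)^v) = φ(I) + φ(J); that is, φ is a group homomorphism from the group of divisorial fractional ideals under v-multiplication to (ℝ, +). -/

import Mathlib

noncomputable section

/-- The `v`-operation `E ↦ (E⁻¹)⁻¹ = (D : (D : E))` on `D`-submodules of `K`. -/
def vOp (D K : Type*) [CommRing D] [Field K] [Algebra D K] (E : Submodule D K) :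
    Submodule D K :=
  (1 : Submodule D K) / ((1 : Submodule D K) / E)

/-- `φ(I) := sup {ω(x) : x ∈ K^×, I ⊆ xD}`. -/
def phiVal (D K : Type*) [CommRing D] [Field K] [Algebra D K] (ω : K → ℝ)
    (I : Submodule D K) : ℝ :=
  sSup {r : ℝ | ∃ x : K, x ≠ 0 ∧ I ≤ Submodule.span D {x} ∧ ω x = r}

/-!
Since `ω(yx⁻¹) ≥ 0` exactly when `yx⁻¹ ∈ D`, a fractional ideal `I` lies in `xD` iff `ω x` is a
lower bound of the values `ω(I ∖ 0)`. So `φ(I)` is the supremum of the lower bounds of `ω(I ∖ 0)`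
lying in the value group, which by density is `inf ω(I ∖ 0)`. The principal ideals `xD` are
divisorial, so `φ(Eᵛ) = φ(E)`; and `inf ω(IJ ∖ 0) = inf ω(I ∖ 0) + inf ω(J ∖ 0)`: the inequality
`≤` is seen on products `yz`, and `≥` by writing any `x` of value below the right-hand side as
`x = x₁ x₂` with `I ⊆ x₁D`, `J ⊆ x₂D`, so that `IJ ⊆ xD`.
-/

open Submodule

theorem csSup_lowerBounds_inter_of_isGLB {S G : Set ℝ} {m : ℝ} (hG : Dense G)
    (hm : IsGLB S m) : sSup (lowerBounds S ∩ G) = m := by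
  have hlb {g : ℝ} (hg : g < m) : g ∈ lowerBounds S := fun _ hs => hg.le.trans (hm.1 hs)
  refine IsLUB.csSup_eq ⟨fun l hl => hm.2 hl.1, fun u hu => ?_⟩ ?_
  · by_contra! hum
    obtain ⟨g, hgG, hug, hgm⟩ := hG.exists_between hum
    exact (hu ⟨hlb hgm, hgG⟩).not_gt hug
  · obtain ⟨g, hgG, -, hgm⟩ := hG.exists_between (sub_one_lt m)
    exact ⟨g, hlb hgm, hgG⟩

section vOp

variable {D K : Type*} [CommRing D] [Field K] [Algebra D K]

theorem mem_span_singleton_iff_mul_inv_mem_one {x y : K} (hx : x ≠ 0) :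
    y ∈ span D {x} ↔ y * x⁻¹ ∈ (1 : Submodule D K) := by
  simp only [mem_span_singleton, mem_one, Algebra.smul_def, eq_mul_inv_iff_mul_eq₀ hx]

theorem le_vOp (E : Submodule D K) : E ≤ vOp D K E := by
  rw [vOp, Submodule.le_div_iff_mul_le, mul_comm]
  exact Submodule.le_div_iff_mul_le.1 le_rfl

theorem vOp_le_span_singleton_iff {x : K} (hx : x ≠ 0) {E : Submodule D K} :
    vOp D K E ≤ span D {x} ↔ E ≤ span D {x} := by
  refine ⟨(le_vOp E).trans, fun hE z hz => ?_⟩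
  have hxinv : x⁻¹ ∈ (1 : Submodule D K) / E := mem_div_iff_forall_mul_mem.2 fun e he =>
    mul_comm e x⁻¹ ▸ (mem_span_singleton_iff_mul_inv_mem_one hx).1 (hE he)
  exact (mem_span_singleton_iff_mul_inv_mem_one hx).2 (mem_div_iff_forall_mul_mem.1 hz _ hxinv)

theorem phiVal_vOp (ω : K → ℝ) (E : Submodule D K) :
    phiVal D K ω (vOp D K E) = phiVal D K ω E := by
  unfold phiVal
  congr 1
  ext r
  exact exists_congr fun x => and_congr_right fun hx =>
    and_congr_left' (vOp_le_span_singleton_iff hx)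

end vOp

section Valuation

variable {D K : Type*} [CommRing D] [Field K] [Algebra D K]

def valueSet (ω : K → ℝ) (I : Submodule D K) : Set ℝ :=
  ω '' {y | y ∈ I ∧ y ≠ 0}

variable {ω : K → ℝ}
variable (hhom : ∀ x y : K, x ≠ 0 → y ≠ 0 → ω (x * y) = ω x + ω y)
variable (hD : ∀ x : K, (∃ d : D, algebraMap D K d = x) ↔ x = 0 ∨ 0 ≤ ω x)

include hhom hD in
theorem mem_span_singleton_iff_le {x y : K} (hx : x ≠ 0) :
    y ∈ span D {x} ↔ y = 0 ∨ ω x ≤ ω y := by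
  rw [mem_span_singleton_iff_mul_inv_mem_one hx, mem_one, hD, mul_eq_zero, inv_eq_zero,
    or_iff_left hx]
  refine or_congr_right' fun hy => ?_
  have := hhom (y * x⁻¹) x (mul_ne_zero hy (inv_ne_zero hx)) hx
  rw [inv_mul_cancel_right₀ hx] at this
  constructor <;> intro <;> linarith

include hhom hD in
theorem span_singleton_le_iff_mem_lowerBounds {x : K} (hx : x ≠ 0) {I : Submodule D K} :
    I ≤ span D {x} ↔ ω x ∈ lowerBounds (valueSet ω I) := by
  constructor
  · rintro hI _ ⟨y, ⟨hy, hy0⟩, rfl⟩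
    exact ((mem_span_singleton_iff_le hhom hD hx).1 (hI hy)).resolve_left hy0
  · exact fun h y hy => (mem_span_singleton_iff_le hhom hD hx).2
      (or_iff_not_imp_left.2 fun hy0 => h ⟨y, ⟨hy, hy0⟩, rfl⟩)

include hhom hD in
theorem phiVal_eq_of_isGLB (hG : Dense (ω '' {0}ᶜ)) {I : Submodule D K} {a : ℝ}
    (ha : IsGLB (valueSet ω I) a) : phiVal D K ω I = a := by
  have hset : {r : ℝ | ∃ x : K, x ≠ 0 ∧ I ≤ span D {x} ∧ ω x = r} =
      lowerBounds (valueSet ω I) ∩ ω '' {0}ᶜ := by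
    ext r
    constructor
    · rintro ⟨x, hx, hI, rfl⟩
      exact ⟨(span_singleton_le_iff_mem_lowerBounds hhom hD hx).1 hI, x, hx, rfl⟩
    · rintro ⟨hr, x, hx, rfl⟩
      exact ⟨x, hx, (span_singleton_le_iff_mem_lowerBounds hhom hD hx).2 hr, rfl⟩
  rw [phiVal, hset]
  exact csSup_lowerBounds_inter_of_isGLB hG ha

include hhom hD in
theorem bddBelow_valueSet [IsFractionRing D K] {I : Submodule D K}
    (hI : IsFractional (nonZeroDivisors D) I) : BddBelow (valueSet ω I) := by
  obtain ⟨a, ha, hint⟩ := hI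
  have : Nontrivial D := (algebraMap D K).domain_nontrivial
  have hu : algebraMap D K a ≠ 0 := IsFractionRing.to_map_ne_zero_of_mem_nonZeroDivisors ha
  refine ⟨-ω (algebraMap D K a), ?_⟩
  rintro _ ⟨y, ⟨hy, hy0⟩, rfl⟩
  obtain ⟨d, hd⟩ := hint y hy
  rw [Algebra.smul_def] at hd
  have hval := ((hD _).1 ⟨d, hd⟩).resolve_left (mul_ne_zero hu hy0)
  rw [hhom _ _ hu hy0] at hval
  linarith

theorem valueSet_nonempty {I : Submodule D K} (hI : I ≠ ⊥) : (valueSet ω I).Nonempty :=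
  let ⟨y, hy, hy0⟩ := exists_mem_ne_zero_of_ne_bot hI
  ⟨ω y, y, ⟨hy, hy0⟩, rfl⟩

include hhom hD in
theorem isGLB_phiVal [IsFractionRing D K] (hG : Dense (ω '' {0}ᶜ)) {I : Submodule D K}
    (hI : I ≠ ⊥) (hIf : IsFractional (nonZeroDivisors D) I) :
    IsGLB (valueSet ω I) (phiVal D K ω I) := by
  have h := isGLB_csInf (valueSet_nonempty hI) (bddBelow_valueSet hhom hD hIf)
  rwa [phiVal_eq_of_isGLB hhom hD hG h]

include hhom hD in
theorem isGLB_valueSet_mul (hG : Dense (ω '' {0}ᶜ)) {I J : Submodule D K} {a b : ℝ}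
    (ha : IsGLB (valueSet ω I) a) (hb : IsGLB (valueSet ω J) b) :
    IsGLB (valueSet ω (I * J)) (a + b) := by
  constructor
  · rintro _ ⟨w, ⟨hw, hw0⟩, rfl⟩
    by_contra! hlt
    obtain ⟨_, ⟨x, hx, rfl⟩, hwx, hxab⟩ := hG.exists_between hlt
    obtain ⟨_, ⟨x₁, hx₁, rfl⟩, hx₁b, hx₁a⟩ := hG.exists_between (show ω x - b < a by linarith)
    have hx₂ : x / x₁ ≠ 0 := div_ne_zero hx hx₁
    have hval : ω (x / x₁) + ω x₁ = ω x := by rw [← hhom _ _ hx₂ hx₁, div_mul_cancel₀ x hx₁]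
    have hI : I ≤ span D {x₁} := (span_singleton_le_iff_mem_lowerBounds hhom hD hx₁).2
      fun r hr => hx₁a.le.trans (ha.1 hr)
    have hJ : J ≤ span D {x / x₁} := (span_singleton_le_iff_mem_lowerBounds hhom hD hx₂).2
      fun r hr => (show ω (x / x₁) ≤ b by linarith).trans (hb.1 hr)
    have hIJ : I * J ≤ span D {x} := by
      simpa [span_mul_span, mul_div_cancel₀ x hx₁] using mul_le_mul' hI hJ
    have := ((mem_span_singleton_iff_le hhom hD hx).1 (hIJ hw)).resolve_left hw0
    linarith
  · intro c hc
    have hca : ∀ r ∈ valueSet ω J, c - r ≤ a := by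
      rintro _ ⟨z, ⟨hz, hz0⟩, rfl⟩
      refine ha.2 ?_
      rintro _ ⟨y, ⟨hy, hy0⟩, rfl⟩
      have := hc ⟨y * z, ⟨mul_mem_mul hy hz, mul_ne_zero hy0 hz0⟩, rfl⟩
      rw [hhom _ _ hy0 hz0] at this
      linarith
    have : c - a ≤ b := hb.2 fun r hr => by linarith [hca r hr]
    linarith

end Valuation

theorem phiVal_v_mul_general
    (D K : Type*) [CommRing D] [Field K] [Algebra D K] [IsFractionRing D K]
    (ω : K → ℝ)
    (hhom : ∀ x y : K, x ≠ 0 → y ≠ 0 → ω (x * y) = ω x + ω y)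
    -- `D = {x ∈ K : x = 0 ∨ ω(x) ≥ 0}`:
    (hD : ∀ x : K, (∃ d : D, algebraMap D K d = x) ↔ x = 0 ∨ 0 ≤ ω x)
    (hdense : ∀ a b : ℝ, a < b → ∃ x : K, x ≠ 0 ∧ a < ω x ∧ ω x < b) :
    ∀ I J : Submodule D K,
      I ≠ ⊥ → IsFractional (nonZeroDivisors D) I → vOp D K I = I →
      J ≠ ⊥ → IsFractional (nonZeroDivisors D) J → vOp D K J = J →
      phiVal D K ω (vOp D K (I * J)) = phiVal D K ω I + phiVal D K ω J := by
  intro I J hI hIf _ hJ hJf _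
  have hG : Dense (ω '' {0}ᶜ) := dense_of_exists_between fun a b hab =>
    let ⟨x, hx, hax, hxb⟩ := hdense a b hab
    ⟨ω x, ⟨x, hx, rfl⟩, hax, hxb⟩
  rw [phiVal_vOp]
  exact phiVal_eq_of_isGLB hhom hD hG <| isGLB_valueSet_mul hhom hD hG
    (isGLB_phiVal hhom hD hG hI hIf) (isGLB_phiVal hhom hD hG hJ hJf)

/-- **Lemma 2.12.** Let `D` be a one-dimensional valuation domain, not a DVR, with quotient
field `K`, valuation `ω : K^× → ℝ` and value group `G = ω(K^×)` dense in `ℝ`.  Then for all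
divisorial fractional ideals `I, J` of `D`, `φ((IJ)ᵛ) = φ(I) + φ(J)`: `φ` is a group
homomorphism from the group of divisorial fractional ideals under `v`-multiplication
to `(ℝ, +)`. -/
theorem phiVal_v_mul
    (D K : Type*) [CommRing D] [IsDomain D] [Field K] [Algebra D K] [IsFractionRing D K]
    (ω : K → ℝ)
    (hhom : ∀ x y : K, x ≠ 0 → y ≠ 0 → ω (x * y) = ω x + ω y)
    (hmin : ∀ x y : K, x ≠ 0 → y ≠ 0 → x + y ≠ 0 → min (ω x) (ω y) ≤ ω (x + y))
    -- `D = {x ∈ K : x = 0 ∨ ω(x) ≥ 0}`: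
    (hD : ∀ x : K, (∃ d : D, algebraMap D K d = x) ↔ x = 0 ∨ 0 ≤ ω x)
    -- `D` is not a DVR, i.e. the value group `G = ω(K^×)` is dense in `ℝ`:
    (hnotdvr : ¬ IsDiscreteValuationRing D)
    (hdense : ∀ a b : ℝ, a < b → ∃ x : K, x ≠ 0 ∧ a < ω x ∧ ω x < b) :
    ∀ I J : Submodule D K,
      I ≠ ⊥ → IsFractional (nonZeroDivisors D) I → vOp D K I = I →
      J ≠ ⊥ → IsFractional (nonZeroDivisors D) J → vOp D K J = J →
      phiVal D K ω (vOp D K (I * J)) = phiVal D K ω I + phiVal D K ω J :=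
  phiVal_v_mul_general D K ω hhom hD hdense
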